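/- Let G be the 6-vertex 'friendly diamond' graph with vertex set {p, a, c, d, b, q} and edges p–a, a–c, a–d, c–b, d–b, b–q, and let v be the common additive valuation assigning weight 1 to every vertex. Then there is no connected EF1 allocation of G among 3 agents with this valuation (hence no connected EF1-outer allocation). -/

import Mathlib

/-! With unit weights, EF1 says that any two bundles differ in size by at most one, so six
vertices shared among three agents go out in bundles of two. A connected bundle of two vertices
is an edge, so such an allocation is a perfect matching of the friendly diamond, and there is
none: the pendant vertices p and q must be matched with a and b, leaving c without a partner. -/

open Finset

variable {V : Type*}

/-- A piece of an allocation: either empty or inducing a connected subgraph. -/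
def ConnPiece (G : SimpleGraph V) (S : Finset V) : Prop :=
  S = ∅ ∨ (G.induce (S : Set V)).Connected

/-- A connected allocation: a partition of `V` into `n` pieces, each connected. -/
def IsConnAlloc (G : SimpleGraph V) {n : ℕ} (A : Fin n → Finset V) : Prop :=
  (∀ x : V, ∃! i, x ∈ A i) ∧ ∀ i, ConnPiece G (A i)

def IsMonotoneVal (v : Finset V → ℝ) : Prop :=
  v ∅ = 0 ∧ (∀ S, 0 ≤ v S) ∧ ∀ S T : Finset V, S ⊆ T → v S ≤ v T

def IsAdditiveVal (v : Finset V → ℝ) : Prop :=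
  (∀ S, 0 ≤ v S) ∧ ∀ S : Finset V, v S = ∑ x ∈ S, v {x}

def IsEF1 [DecidableEq V] {n : ℕ} (v : Fin n → Finset V → ℝ) (A : Fin n → Finset V) : Prop :=
  ∀ i j : Fin n, v i (A i) ≥ v i (A j) ∨ ∃ x ∈ A j, v i (A i) ≥ v i ((A j).erase x)

def IsEF1Outer [DecidableEq V] (G : SimpleGraph V) {n : ℕ}
    (v : Fin n → Finset V → ℝ) (A : Fin n → Finset V) : Prop :=
  ∀ i j : Fin n, v i (A i) ≥ v i (A j) ∨
    ∃ x ∈ A j, ConnPiece G ((A j).erase x) ∧ v i (A i) ≥ v i ((A j).erase x)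

/-- A generalized cutset for `G`, with gap `r ≥ 2`. -/
structure GenCutset (G : SimpleGraph V) where
  t : ℕ
  C : Fin t → Finset V
  τ : Fin t → ℕ
  r : ℕ
  r_ge : 2 ≤ r
  H : Fin ((∑ i, τ i) + r) → Finset V
  C_nonempty : ∀ i, (C i).Nonempty
  C_disjoint : ∀ i j, i ≠ j → Disjoint (C i) (C j)
  C_connected : ∀ i, (G.induce ((C i : Set V))).Connected
  H_nonempty : ∀ j, (H j).Nonempty
  H_disjoint : ∀ j k, j ≠ k → Disjoint (H j) (H k)
  H_partition : ∀ x : V, (∀ i, x ∉ C i) ↔ ∃ j, x ∈ H j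
  H_independent : ∀ j k, j ≠ k → ∀ x ∈ H j, ∀ y ∈ H k, ¬ G.Adj x y
  contact_unique : ∀ i j, ∀ x ∈ C i, ∀ y ∈ C i,
      (∃ z ∈ H j, G.Adj x z) → (∃ z ∈ H j, G.Adj y z) → x = y
  typeI_tau : ∀ i, (C i).card = 1 → τ i = 1
  typeII_indep : ∀ i i', i ≠ i' → 1 < (C i).card → 1 < (C i').card →
      ∀ x ∈ C i, ∀ y ∈ C i', ¬ G.Adj x y
  typeII_contacts : ∀ i, 1 < (C i).card →
      (∃ S : Finset (Fin ((∑ i, τ i) + r)), S.card = 2 * τ i + 1 ∧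
        ∀ j, j ∈ S ↔ ∃ x ∈ C i, ∃ z ∈ H j, G.Adj x z) ∧
      (∀ x ∈ C i, ∀ j k, (∃ z ∈ H j, G.Adj x z) → (∃ z ∈ H k, G.Adj x z) → j = k)

/-- The valence of a generalized cutset. -/
abbrev GenCutset.valence {G : SimpleGraph V} (cs : GenCutset G) : ℕ := ∑ i, cs.τ i

/-- `S` dominates a member of the cutset. -/
def GenCutset.Dominates {G : SimpleGraph V} (cs : GenCutset G)
    (S : Finset V) (i : Fin cs.t) : Prop :=
  ((cs.C i).card = 1 ∧ cs.C i ⊆ S) ∨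
  (1 < (cs.C i).card ∧ ∃ x, x ∈ cs.C i ∧ x ∈ S ∧ ∃ y, y ∈ cs.C i ∧ y ∈ S ∧ x ≠ y ∧
    (∃ j, ∃ z ∈ cs.H j, G.Adj x z) ∧ (∃ j, ∃ z ∈ cs.H j, G.Adj y z))

/-- The 'friendly diamond' graph: vertices p,a,c,d,b,q are 0,…,5;
edges p–a, a–c, a–d, c–b, d–b, b–q. -/
def FriendlyDiamond : SimpleGraph (Fin 6) :=
  SimpleGraph.fromRel (fun x y =>
    (x, y) ∈ ([(0,1),(1,2),(1,3),(2,4),(3,4),(4,5)] : List (Fin 6 × Fin 6)))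

/-- The common additive valuation assigning weight 1 to every vertex. -/
def fdV (S : Finset (Fin 6)) : ℝ := ∑ _x ∈ S, (1 : ℝ)


instance : DecidableRel FriendlyDiamond.Adj := fun x y =>
  decidable_of_iff _ (SimpleGraph.fromRel_adj _ x y).symm

/-- A perfect matching of `G`, given by the map sending each vertex to its partner. -/
def SimpleGraph.IsMatchingInvolution (G : SimpleGraph V) (m : V → V) : Prop :=
  Function.Involutive m ∧ ∀ x, G.Adj x (m x)

theorem SimpleGraph.adj_of_induce_pair_connected {G : SimpleGraph V} {x y : V}
    (h : (G.induce {x, y}).Connected) (hxy : x ≠ y) : G.Adj x y := by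
  have : Nontrivial ({x, y} : Set V) := (Set.nontrivial_pair hxy).coe_sort
  obtain ⟨⟨z, hz⟩, hxz⟩ := h.preconnected.exists_adj_of_nontrivial ⟨x, by simp⟩
  obtain rfl | rfl := hz
  · exact (G.ne_of_adj hxz rfl).elim
  · exact hxz

theorem IsEF1Outer.isEF1 [DecidableEq V] {G : SimpleGraph V} {n : ℕ}
    {v : Fin n → Finset V → ℝ} {A : Fin n → Finset V} (h : IsEF1Outer G v A) : IsEF1 v A :=
  fun i j => (h i j).imp_right fun ⟨x, hx, _, hle⟩ => ⟨x, hx, hle⟩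

theorem IsEF1.card_le_card_add_one [DecidableEq V] {n : ℕ} {A : Fin n → Finset V}
    (h : IsEF1 (fun _ S => (#S : ℝ)) A) (i j : Fin n) : #(A j) ≤ #(A i) + 1 := by
  rcases h i j with hle | ⟨x, hx, hle⟩
  · have : #(A j) ≤ #(A i) := by exact_mod_cast (show (#(A j) : ℝ) ≤ #(A i) from hle)
    omega
  · have : #(A j) - 1 ≤ #(A i) := by
      rw [← card_erase_of_mem hx]
      exact_mod_cast (show (#((A j).erase x) : ℝ) ≤ #(A i) from hle)
    omega

theorem sum_card_eq_card_of_existsUnique_mem [Fintype V] [DecidableEq V] {n : ℕ}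
    {A : Fin n → Finset V} (hA : ∀ x, ∃! i, x ∈ A i) : ∑ i, #(A i) = Fintype.card V := by
  have hdisj : (Set.univ : Set (Fin n)).PairwiseDisjoint A := fun i _ j _ hij =>
    disjoint_left.mpr fun x hxi hxj => hij ((hA x).unique hxi hxj)
  have hcover : univ.biUnion A = univ :=
    eq_univ_of_forall fun x => mem_biUnion.mpr ⟨_, mem_univ _, (hA x).exists.choose_spec⟩
  rw [← card_biUnion (by simpa using hdisj), hcover, card_univ]

theorem eq_of_sum_eq_card_mul_of_le_add_one {ι : Type*} [Fintype ι] {k : ℕ} {c : ι → ℕ}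
    (hsum : ∑ i, c i = Fintype.card ι * k) (hc : ∀ i j, c j ≤ c i + 1) (i : ι) : c i = k := by
  by_contra hne
  rcases Nat.lt_or_gt_of_ne hne with hlt | hgt
  · have : ∑ j, c j < ∑ _j : ι, k :=
      sum_lt_sum (fun j _ => (hc i j).trans hlt) ⟨i, mem_univ _, hlt⟩
    simp [hsum] at this
  · have : ∑ _j : ι, k < ∑ j, c j :=
      sum_lt_sum (fun j _ => by have := hc j i; omega) ⟨i, mem_univ _, hgt⟩
    simp [hsum] at this

theorem IsConnAlloc.exists_isMatchingInvolution [DecidableEq V] {G : SimpleGraph V} {n : ℕ}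
    {A : Fin n → Finset V} (hA : IsConnAlloc G A) (hcard : ∀ i, #(A i) = 2) :
    ∃ m, G.IsMatchingInvolution m := by
  have hmate : ∀ x, ∃ y, G.Adj x y ∧ ∃ i, A i = {x, y} := by
    intro x
    obtain ⟨i, hxi, -⟩ := hA.1 x
    obtain ⟨a, b, hab, hi⟩ := card_eq_two.mp (hcard i)
    have hconn : (G.induce {a, b}).Connected := by
      rcases hA.2 i with hempty | hconn
      · simp [hi] at hempty
      · rwa [hi, coe_pair] at hconn
    rw [hi, mem_insert, mem_singleton] at hxi
    rcases hxi with rfl | rfl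
    · exact ⟨b, G.adj_of_induce_pair_connected hconn hab, i, hi⟩
    · exact ⟨a, (G.adj_of_induce_pair_connected hconn hab).symm, i, hi.trans (pair_comm _ _)⟩
  choose m hadj i hi using hmate
  refine ⟨m, fun x => ?_, hadj⟩
  have hsame : i (m x) = i x := (hA.1 (m x)).unique (by simp [hi]) (by simp [hi])
  have hx : x ∈ A (i (m x)) := by simp [hsame, hi]
  rw [hi, mem_insert, mem_singleton] at hx
  rcases hx with h | h
  · exact (G.ne_of_adj (hadj x) h).elim
  · exact h.symm

theorem IsConnAlloc.not_isEF1_card [Fintype V] [DecidableEq V] {G : SimpleGraph V} {n : ℕ}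
    (hV : Fintype.card V = n * 2) (hG : ∀ m, ¬ G.IsMatchingInvolution m)
    {A : Fin n → Finset V} (hA : IsConnAlloc G A) : ¬ IsEF1 (fun _ S => (#S : ℝ)) A := by
  intro hEF
  have hsum : ∑ i, #(A i) = Fintype.card (Fin n) * 2 := by
    rw [sum_card_eq_card_of_existsUnique_mem hA.1, hV, Fintype.card_fin]
  obtain ⟨m, hm⟩ := hA.exists_isMatchingInvolution
    (eq_of_sum_eq_card_mul_of_le_add_one hsum hEF.card_le_card_add_one)
  exact hG m hm

theorem friendlyDiamond_not_isMatchingInvolution (m : Fin 6 → Fin 6) :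
    ¬ FriendlyDiamond.IsMatchingInvolution m := by
  rintro ⟨hm, hadj⟩
  have neighbors_0 : ∀ y, FriendlyDiamond.Adj 0 y → y = 1 := by decide
  have neighbors_5 : ∀ y, FriendlyDiamond.Adj 5 y → y = 4 := by decide
  have neighbors_2 : ∀ y, FriendlyDiamond.Adj 2 y → y = 1 ∨ y = 4 := by decide
  have h0 := neighbors_0 _ (hadj 0)
  have h5 := neighbors_5 _ (hadj 5)
  rcases neighbors_2 _ (hadj 2) with h2 | h2
  · exact absurd ((hm 2).symm.trans (h2 ▸ h0 ▸ hm 0)) (by decide)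
  · exact absurd ((hm 2).symm.trans (h2 ▸ h5 ▸ hm 5)) (by decide)

/-- with the all-ones common additive valuation, there is no connected EF1
(hence no connected EF1-outer) allocation of the friendly diamond among 3 agents. -/
theorem friendly_diamond_no_connected_EF1 :
    ¬ ∃ A : Fin 3 → Finset (Fin 6), IsConnAlloc FriendlyDiamond A ∧
        (IsEF1 (fun _ : Fin 3 => fdV) A ∨
          IsEF1Outer FriendlyDiamond (fun _ : Fin 3 => fdV) A) := by
  rintro ⟨A, hA, hEF⟩
  have hfdV : fdV = fun S => (#S : ℝ) := funext fun S => by simp [fdV]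
  rw [hfdV] at hEF
  exact hA.not_isEF1_card rfl friendlyDiamond_not_isMatchingInvolution
    (hEF.elim id IsEF1Outer.isEF1)
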